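/- arXiv:2103.02757 — 5 statements merged into one kernel-verified Lean document; each statement's English description precedes it below -/
import Mathlib

section
/- Let ε > 0, let n ≥ 1, and let O₀, O₁ ⊆ ℝ³ be open sets such that some point of O₀ has distance ε from some point of O₁. Then there exist two distinct points y₀, y₁ ∈ O₀ and n distinct points z₀, …, z_{n-1} ∈ O₁ such that dist(yᵢ, zⱼ) = ε for all i < 2 and j < n. -/
open scoped RealInnerProductSpace

section helpers

variable {E : Type*} [NormedAddCommGroup E] [InnerProductSpace ℝ E]
variable (u b c : E)

lemma norm_sq_triple (hu : ‖u‖ = 1) (hb : ‖b‖ = 1) (hc : ‖c‖ = 1)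
    (hub : ⟪u, b⟫ = 0) (huc : ⟪u, c⟫ = 0) (hbc : ⟪b, c⟫ = 0)
    (α β γ : ℝ) : ‖α • u + β • b + γ • c‖ ^ 2 = α ^ 2 + β ^ 2 + γ ^ 2 := by
  have hbu : ⟪b, u⟫ = 0 := by rw [real_inner_comm]; exact hub
  have hcu : ⟪c, u⟫ = 0 := by rw [real_inner_comm]; exact huc
  have hcb : ⟪c, b⟫ = 0 := by rw [real_inner_comm]; exact hbc
  rw [← real_inner_self_eq_norm_sq]
  simp only [inner_add_left, inner_add_right, real_inner_smul_left, real_inner_smul_right,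
    hub, huc, hbc, hbu, hcu, hcb, real_inner_self_eq_norm_sq, norm_smul, Real.norm_eq_abs,
    mul_pow, sq_abs, hu, hb, hc]
  ring

lemma dist_cross (hu : ‖u‖ = 1) (hb : ‖b‖ = 1) (hc : ‖c‖ = 1)
    (hub : ⟪u, b⟫ = 0) (huc : ⟪u, c⟫ = 0) (hbc : ⟪b, c⟫ = 0)
    (x₀ : E) (s p q : ℝ) :
    dist (x₀ + s • b) (x₀ + p • u + q • c) ^ 2 = s ^ 2 + p ^ 2 + q ^ 2 := by
  rw [dist_eq_norm]
  have h : (x₀ + s • b) - (x₀ + p • u + q • c) = (-p) • u + s • b + (-q) • c := by module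
  rw [h, norm_sq_triple u b c hu hb hc hub huc hbc]
  ring

lemma dist_z_x₁ (hu : ‖u‖ = 1) (hb : ‖b‖ = 1) (hc : ‖c‖ = 1)
    (hub : ⟪u, b⟫ = 0) (huc : ⟪u, c⟫ = 0) (hbc : ⟪b, c⟫ = 0)
    (x₀ : E) (ε p q : ℝ) :
    dist (x₀ + p • u + q • c) (x₀ + ε • u) ^ 2 = (p - ε) ^ 2 + q ^ 2 := by
  rw [dist_eq_norm]
  have h : (x₀ + p • u + q • c) - (x₀ + ε • u) = (p - ε) • u + (0:ℝ) • b + q • c := by module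
  rw [h, norm_sq_triple u b c hu hb hc hub huc hbc]
  ring

lemma dist_y_x₀ (hb : ‖b‖ = 1) (x₀ : E) (s : ℝ) :
    dist (x₀ + s • b) x₀ = |s| := by
  rw [dist_eq_norm, add_sub_cancel_left, norm_smul, hb, mul_one, Real.norm_eq_abs]

lemma extract_q (hu : ‖u‖ = 1) (hc : ‖c‖ = 1) (huc : ⟪u, c⟫ = 0)
    (x₀ : E) (p q p' q' : ℝ) (h : x₀ + p • u + q • c = x₀ + p' • u + q' • c) :
    q = q' := by
  have h2 := congrArg (fun w => ⟪c, w⟫) h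
  have hcu : ⟪c, u⟫ = 0 := by rw [real_inner_comm]; exact huc
  simpa [inner_add_right, real_inner_smul_right, hcu,
    real_inner_self_eq_norm_sq, hc] using h2

lemma extract_s (hb : ‖b‖ = 1) (x₀ : E) (s s' : ℝ)
    (h : x₀ + s • b = x₀ + s' • b) : s = s' := by
  have h2 := congrArg (fun w => ⟪b, w⟫) h
  simpa [inner_add_right, real_inner_smul_right,
    real_inner_self_eq_norm_sq, hb] using h2

end helpers

set_option maxHeartbeats 1000000 in
/-- In `ℝ³`, if open sets `O₀, O₁` contain points at distance exactly `ε`, then there are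
two distinct points of `O₀` and `n` distinct points of `O₁` with all cross distances `ε`. -/
theorem two_times_n_in_R3 (ε : ℝ) (hε : 0 < ε) (n : ℕ) (hn : 1 ≤ n)
    (O₀ O₁ : Set (EuclideanSpace ℝ (Fin 3))) (h₀ : IsOpen O₀) (h₁ : IsOpen O₁)
    (hx : ∃ x₀ ∈ O₀, ∃ x₁ ∈ O₁, dist x₀ x₁ = ε) :
    ∃ (y : Fin 2 → EuclideanSpace ℝ (Fin 3)) (z : Fin n → EuclideanSpace ℝ (Fin 3)),
      Function.Injective y ∧ Function.Injective z ∧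
      (∀ i, y i ∈ O₀) ∧ (∀ j, z j ∈ O₁) ∧
      ∀ (i : Fin 2) (j : Fin n), dist (y i) (z j) = ε := by
  obtain ⟨x₀, hx₀, x₁, hx₁, hd⟩ := hx
  obtain ⟨ρ₀, hρ₀, hball₀⟩ := Metric.isOpen_iff.1 h₀ x₀ hx₀
  obtain ⟨ρ₁, hρ₁, hball₁⟩ := Metric.isOpen_iff.1 h₁ x₁ hx₁
  have hna : ‖x₁ - x₀‖ = ε := by rw [← dist_eq_norm, dist_comm]; exact hd
  have hune : ‖(ε⁻¹ • (x₁ - x₀) : EuclideanSpace ℝ (Fin 3))‖ = 1 := by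
    rw [norm_smul, hna, norm_inv, Real.norm_of_nonneg hε.le, inv_mul_cancel₀ hε.ne']
  have hcard : Module.finrank ℝ (EuclideanSpace ℝ (Fin 3)) = Fintype.card (Fin 3) := by simp
  have horth : Orthonormal ℝ (({0} : Set (Fin 3)).restrict
      (fun _ => (ε⁻¹ • (x₁ - x₀) : EuclideanSpace ℝ (Fin 3)))) := by
    constructor
    · intro i; exact hune
    · rintro ⟨i, hi⟩ ⟨j, hj⟩ hij
      simp only [Set.mem_singleton_iff] at hi hj
      exact absurd (Subtype.ext (hi.trans hj.symm)) hij
  obtain ⟨B, hB⟩ := horth.exists_orthonormalBasis_extension_of_card_eq hcard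
  have hB0 : B 0 = ε⁻¹ • (x₁ - x₀) := hB 0 rfl
  have hx₁eq : x₁ = x₀ + ε • B 0 := by
    rw [hB0, smul_inv_smul₀ hε.ne']; abel
  have n0 : ‖B 0‖ = 1 := B.orthonormal.1 0
  have n1 : ‖B 1‖ = 1 := B.orthonormal.1 1
  have n2 : ‖B 2‖ = 1 := B.orthonormal.1 2
  have i01 : ⟪B 0, B 1⟫ = 0 := B.orthonormal.2 (by decide)
  have i02 : ⟪B 0, B 2⟫ = 0 := B.orthonormal.2 (by decide)
  have i12 : ⟪B 1, B 2⟫ = 0 := B.orthonormal.2 (by decide)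
  -- parameters
  set t : ℝ := min (min ρ₀ ρ₁) ε / 2 with ht
  have ht0 : 0 < t := div_pos (lt_min (lt_min hρ₀ hρ₁) hε) two_pos
  have htρ₀ : t < ρ₀ := by
    have : min (min ρ₀ ρ₁) ε ≤ ρ₀ := le_trans (min_le_left _ _) (min_le_left _ _)
    rw [ht]; linarith
  have htρ₁ : t ≤ ρ₁ / 2 := by
    have : min (min ρ₀ ρ₁) ε ≤ ρ₁ := le_trans (min_le_left _ _) (min_le_right _ _)
    rw [ht]; linarith
  have htε : t ≤ ε / 2 := by
    have : min (min ρ₀ ρ₁) ε ≤ ε := min_le_right _ _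
    rw [ht]; linarith
  set q : Fin n → ℝ := fun j => t / ((j : ℝ) + 2) with hq
  have hq0 : ∀ j, 0 < q j := fun j => div_pos ht0 (by positivity)
  have hqt : ∀ j, q j ≤ t / 2 := by
    intro j
    apply div_le_div_of_nonneg_left ht0.le two_pos
    have : (0:ℝ) ≤ (j : ℝ) := Nat.cast_nonneg _
    linarith
  have hqinj : Function.Injective q := by
    intro i j hij
    rw [hq] at hij
    simp only at hij
    have hi2 : (0:ℝ) < (i:ℝ) + 2 := by positivity
    have hj2 : (0:ℝ) < (j:ℝ) + 2 := by positivity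
    rw [div_eq_div_iff hi2.ne' hj2.ne'] at hij
    have h2 : t * ((i:ℝ) + 2) = t * ((j:ℝ) + 2) := by linarith
    have h3 := mul_left_cancel₀ ht0.ne' h2
    have : ((i:ℕ):ℝ) = ((j:ℕ):ℝ) := by linarith
    exact Fin.ext (by exact_mod_cast this)
  have hlt : ∀ j, t ^ 2 + q j ^ 2 < ε ^ 2 := by
    intro j
    have h1 := hqt j
    have h2 := hq0 j
    nlinarith
  set p : Fin n → ℝ := fun j => Real.sqrt (ε ^ 2 - t ^ 2 - q j ^ 2) with hp
  have hp2 : ∀ j, p j ^ 2 = ε ^ 2 - t ^ 2 - q j ^ 2 := by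
    intro j
    apply Real.sq_sqrt
    have := hlt j; linarith
  have hp0 : ∀ j, 0 < p j := by
    intro j
    apply Real.sqrt_pos.2
    have := hlt j; linarith
  have hpε : ∀ j, p j ≤ ε := by
    intro j
    have h1 := hp2 j
    have h2 := hp0 j
    have h3 := hq0 j
    nlinarith
  set s : Fin 2 → ℝ := fun i => if i = 0 then t else -t with hs
  refine ⟨fun i => x₀ + s i • B 1, fun j => x₀ + p j • B 0 + q j • B 2, ?_, ?_, ?_, ?_, ?_⟩
  · -- y injective
    intro i j h
    have hss : s i = s j := extract_s (B 1) n1 x₀ _ _ h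
    rw [hs] at hss
    fin_cases i <;> fin_cases j
    · rfl
    · exfalso; norm_num at hss; linarith
    · exfalso; norm_num at hss; linarith
    · rfl
  · -- z injective
    intro i j h
    exact hqinj (extract_q (B 0) (B 2) n0 n2 i02 x₀ _ _ _ _ h)
  · -- y in O₀
    intro i
    apply hball₀
    rw [Metric.mem_ball, dist_y_x₀ (B 1) n1 x₀]
    have : |s i| = t := by
      rw [hs]; fin_cases i <;> simp [abs_of_pos ht0]
    rw [this]; exact htρ₀
  · -- z in O₁
    intro j
    apply hball₁
    rw [Metric.mem_ball]
    have hsq : dist (x₀ + p j • B 0 + q j • B 2) x₁ ^ 2 = (p j - ε) ^ 2 + q j ^ 2 := by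
      rw [hx₁eq]
      exact dist_z_x₁ (B 0) (B 1) (B 2) n0 n1 n2 i01 i02 i12 x₀ ε (p j) (q j)
    have hbound : dist (x₀ + p j • B 0 + q j • B 2) x₁ ^ 2 < ρ₁ ^ 2 := by
      rw [hsq]
      have h1 := hp2 j
      have h2 := hp0 j
      have h3 := hq0 j
      have h4 := hqt j
      have h5 := hpε j
      have key : (ε - p j) * (ε + p j) = t ^ 2 + q j ^ 2 := by linear_combination (-1 : ℝ) * h1
      have h6 : 0 ≤ ε - p j := by linarith
      have h7 : ε - p j ≤ t := by nlinarith
      nlinarith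
    exact lt_of_pow_lt_pow_left₀ 2 hρ₁.le hbound
  · -- distances
    intro i j
    have hsq : dist (x₀ + s i • B 1) (x₀ + p j • B 0 + q j • B 2) ^ 2 = ε ^ 2 := by
      rw [dist_cross (B 0) (B 1) (B 2) n0 n1 n2 i01 i02 i12 x₀ (s i) (p j) (q j)]
      have hsi : s i ^ 2 = t ^ 2 := by rcases eq_or_ne i 0 with h | h <;> simp [hs, h] <;> ring
      have := hp2 j
      rw [hsi]; linarith
    have : dist (x₀ + s i • B 1) (x₀ + p j • B 0 + q j • B 2) =
        Real.sqrt (dist (x₀ + s i • B 1) (x₀ + p j • B 0 + q j • B 2) ^ 2) :=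
      (Real.sqrt_sq dist_nonneg).symm
    rw [this, hsq, Real.sqrt_sq hε.le]
end

section
/- Let ε > 0 and let O₀, O₁ ⊆ ℝ⁴ be open sets such that some point of O₀ has Euclidean distance ε from some point of O₁. Then for every n ≥ 1 there exist distinct points x₀, …, x_{n-1} ∈ O₀ and distinct points y₀, …, y_{n-1} ∈ O₁ such that dist(xᵢ, yⱼ) = ε for all i, j < n. -/
open Real

section helpers
variable {E : Type*} [NormedAddCommGroup E] [InnerProductSpace ℝ E] [FiniteDimensional ℝ E]

lemma exists_orthonormal_pair (K : Submodule ℝ E) (h : 2 ≤ Module.finrank ℝ K) :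
    ∃ u w : E, u ∈ K ∧ w ∈ K ∧ ‖u‖ = 1 ∧ ‖w‖ = 1 ∧ inner ℝ u w = (0:ℝ) := by
  let B := stdOrthonormalBasis ℝ K
  refine ⟨B ⟨0, by omega⟩, B ⟨1, by omega⟩, (B ⟨0, by omega⟩).2, (B ⟨1, by omega⟩).2,
    B.orthonormal.1 _, B.orthonormal.1 _, ?_⟩
  have := B.orthonormal.2 (i := ⟨0, by omega⟩) (j := ⟨1, by omega⟩) (by simp)
  exact this

lemma exists_unit_orthogonal (K : Submodule ℝ E) (h : 1 ≤ Module.finrank ℝ K) :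
    ∃ u : E, u ∈ K ∧ ‖u‖ = 1 := by
  let B := stdOrthonormalBasis ℝ K
  exact ⟨B ⟨0, by omega⟩, (B ⟨0, by omega⟩).2, B.orthonormal.1 _⟩
end helpers



/-- In `ℝ⁴`, if open sets `O₀, O₁` contain points at distance exactly `ε`, then for every
`n ≥ 1` there are `n` distinct points of `O₀` and `n` distinct points of `O₁` with all
cross distances exactly `ε`. -/
theorem n_times_n_in_R4 (ε : ℝ) (hε : 0 < ε)
    (O₀ O₁ : Set (EuclideanSpace ℝ (Fin 4))) (h₀ : IsOpen O₀) (h₁ : IsOpen O₁)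
    (hx : ∃ x₀ ∈ O₀, ∃ x₁ ∈ O₁, dist x₀ x₁ = ε) (n : ℕ) (hn : 1 ≤ n) :
    ∃ (x y : Fin n → EuclideanSpace ℝ (Fin 4)),
      Function.Injective x ∧ Function.Injective y ∧
      (∀ i, x i ∈ O₀) ∧ (∀ j, y j ∈ O₁) ∧
      ∀ i j : Fin n, dist (x i) (y j) = ε := by
  obtain ⟨x, hxO, y, hyO, hxy⟩ := hx
  have hdim : Module.finrank ℝ (EuclideanSpace ℝ (Fin 4)) = 4 := by simp
  set v : EuclideanSpace ℝ (Fin 4) := y - x with hv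
  have hvnorm : ‖v‖ = ε := by rw [hv, ← dist_eq_norm']; exact hxy
  have hvne : v ≠ 0 := by
    intro h; rw [h, norm_zero] at hvnorm; exact hε.ne' hvnorm.symm
  -- a unit vector orthogonal to v
  obtain ⟨e, heK, henorm⟩ := exists_unit_orthogonal (ℝ ∙ v)ᗮ (by
    have h1 : Module.finrank ℝ (ℝ ∙ v) = 1 := finrank_span_singleton hvne
    have := (ℝ ∙ v).finrank_add_finrank_orthogonal
    omega)
  have hve : inner ℝ v e = (0:ℝ) := (Submodule.mem_orthogonal _ _).1 heK v (Submodule.mem_span_singleton_self v)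
  have hee : inner ℝ e e = (1:ℝ) := by
    rw [real_inner_self_eq_norm_sq, henorm]; norm_num
  have hvv : inner ℝ v v = (ε^2 : ℝ) := by
    rw [real_inner_self_eq_norm_sq, hvnorm]
  -- center of the two circles
  set m : EuclideanSpace ℝ (Fin 4) := x + (1/2 : ℝ) • v + (ε/2) • e with hm
  set a : EuclideanSpace ℝ (Fin 4) := x - m with ha
  set b : EuclideanSpace ℝ (Fin 4) := y - m with hb
  have ha' : a = -((1/2 : ℝ) • v) - (ε/2) • e := by rw [ha, hm]; module
  have hb' : b = (1/2 : ℝ) • v - (ε/2) • e := by rw [hb, hm, hv]; module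
  have hev : inner ℝ e v = (0:ℝ) := by rw [real_inner_comm]; exact hve
  have haa : inner ℝ a a = (ε^2/2 : ℝ) := by
    simp only [ha', inner_sub_left, inner_sub_right, inner_neg_left, inner_neg_right,
      real_inner_smul_left, real_inner_smul_right, hvv, hee, hve, hev]
    ring
  have hbb : inner ℝ b b = (ε^2/2 : ℝ) := by
    simp only [hb', inner_sub_left, inner_sub_right,
      real_inner_smul_left, real_inner_smul_right, hvv, hee, hve, hev]
    ring
  have hab : inner ℝ a b = (0:ℝ) := by
    simp only [ha', hb', inner_sub_left, inner_sub_right, inner_neg_left,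
      real_inner_smul_left, real_inner_smul_right, hvv, hee, hve, hev]
    ring
  set r : ℝ := ε / Real.sqrt 2 with hr
  have hr2 : r * r = ε^2/2 := by
    rw [hr, div_mul_div_comm, Real.mul_self_sqrt (by norm_num)]; ring
  have hrpos : 0 < r := div_pos hε (Real.sqrt_pos.2 (by norm_num))
  set f₁ : EuclideanSpace ℝ (Fin 4) := r⁻¹ • a with hf₁
  set f₃ : EuclideanSpace ℝ (Fin 4) := r⁻¹ • b with hf₃
  have h11 : inner ℝ f₁ f₁ = (1:ℝ) := by
    rw [hf₁, real_inner_smul_left, real_inner_smul_right, haa, ← hr2]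
    field_simp
  have h33 : inner ℝ f₃ f₃ = (1:ℝ) := by
    rw [hf₃, real_inner_smul_left, real_inner_smul_right, hbb, ← hr2]
    field_simp
  have h13 : inner ℝ f₁ f₃ = (0:ℝ) := by
    rw [hf₁, hf₃, real_inner_smul_left, real_inner_smul_right, hab]; ring
  -- orthonormal pair orthogonal to a, b
  obtain ⟨f₂, f₄, hf₂K, hf₄K, hf₂n, hf₄n, h24⟩ :=
    exists_orthonormal_pair (E := EuclideanSpace ℝ (Fin 4)) (K := ((ℝ ∙ a) ⊔ (ℝ ∙ b))ᗮ) (by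
      have h1 : Module.finrank ℝ ((ℝ ∙ a) ⊔ (ℝ ∙ b) : Submodule ℝ (EuclideanSpace ℝ (Fin 4))) ≤ 2 := by
        have h2 := Submodule.finrank_add_le_finrank_add_finrank (ℝ ∙ a) (ℝ ∙ b)
        have h3 : Module.finrank ℝ (ℝ ∙ a : Submodule ℝ (EuclideanSpace ℝ (Fin 4))) ≤ 1 :=
          finrank_span_le_card ({a} : Set (EuclideanSpace ℝ (Fin 4))) |>.trans (by simp)
        have h4 : Module.finrank ℝ (ℝ ∙ b : Submodule ℝ (EuclideanSpace ℝ (Fin 4))) ≤ 1 :=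
          finrank_span_le_card ({b} : Set (EuclideanSpace ℝ (Fin 4))) |>.trans (by simp)
        omega
      have := ((ℝ ∙ a) ⊔ (ℝ ∙ b) : Submodule ℝ (EuclideanSpace ℝ (Fin 4))).finrank_add_finrank_orthogonal
      omega)
  -- orthogonality facts
  have mem_sup_a : a ∈ (ℝ ∙ a) ⊔ (ℝ ∙ b) := Submodule.mem_sup_left (Submodule.mem_span_singleton_self a)
  have mem_sup_b : b ∈ (ℝ ∙ a) ⊔ (ℝ ∙ b) := Submodule.mem_sup_right (Submodule.mem_span_singleton_self b)
  have haf₂ : inner ℝ a f₂ = (0:ℝ) := (Submodule.mem_orthogonal _ _).1 hf₂K a mem_sup_a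
  have hbf₂ : inner ℝ b f₂ = (0:ℝ) := (Submodule.mem_orthogonal _ _).1 hf₂K b mem_sup_b
  have haf₄ : inner ℝ a f₄ = (0:ℝ) := (Submodule.mem_orthogonal _ _).1 hf₄K a mem_sup_a
  have hbf₄ : inner ℝ b f₄ = (0:ℝ) := (Submodule.mem_orthogonal _ _).1 hf₄K b mem_sup_b
  have h12 : inner ℝ f₁ f₂ = (0:ℝ) := by rw [hf₁, real_inner_smul_left, haf₂]; ring
  have h14 : inner ℝ f₁ f₄ = (0:ℝ) := by rw [hf₁, real_inner_smul_left, haf₄]; ring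
  have h32 : inner ℝ f₃ f₂ = (0:ℝ) := by rw [hf₃, real_inner_smul_left, hbf₂]; ring
  have h34 : inner ℝ f₃ f₄ = (0:ℝ) := by rw [hf₃, real_inner_smul_left, hbf₄]; ring
  have h21 : inner ℝ f₂ f₁ = (0:ℝ) := by rw [real_inner_comm]; exact h12
  have h41 : inner ℝ f₄ f₁ = (0:ℝ) := by rw [real_inner_comm]; exact h14
  have h23 : inner ℝ f₂ f₃ = (0:ℝ) := by rw [real_inner_comm]; exact h32
  have h43 : inner ℝ f₄ f₃ = (0:ℝ) := by rw [real_inner_comm]; exact h34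
  have h31 : inner ℝ f₃ f₁ = (0:ℝ) := by rw [real_inner_comm]; exact h13
  have h42 : inner ℝ f₄ f₂ = (0:ℝ) := by rw [real_inner_comm]; exact h24
  have h22 : inner ℝ f₂ f₂ = (1:ℝ) := by rw [real_inner_self_eq_norm_sq, hf₂n]; norm_num
  have h44 : inner ℝ f₄ f₄ = (1:ℝ) := by rw [real_inner_self_eq_norm_sq, hf₄n]; norm_num
  -- the two circles
  set X : ℝ → EuclideanSpace ℝ (Fin 4) :=
    fun θ => m + ((r * Real.cos θ) • f₁ + (r * Real.sin θ) • f₂) with hX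
  set Y : ℝ → EuclideanSpace ℝ (Fin 4) :=
    fun φ => m + ((r * Real.cos φ) • f₃ + (r * Real.sin φ) • f₄) with hY
  have hX0 : X 0 = x := by
    rw [hX]
    simp only [Real.cos_zero, Real.sin_zero, mul_one, mul_zero, zero_smul, add_zero]
    rw [hf₁, smul_smul, mul_inv_cancel₀ hrpos.ne', one_smul, ha]
    abel
  have hY0 : Y 0 = y := by
    rw [hY]
    simp only [Real.cos_zero, Real.sin_zero, mul_one, mul_zero, zero_smul, add_zero]
    rw [hf₃, smul_smul, mul_inv_cancel₀ hrpos.ne', one_smul, hb]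
    abel
  -- all cross distances are ε
  have key : ∀ θ φ : ℝ, dist (X θ) (Y φ) = ε := by
    intro θ φ
    have hd : X θ - Y φ = ((r * Real.cos θ) • f₁ + (r * Real.sin θ) • f₂) -
        ((r * Real.cos φ) • f₃ + (r * Real.sin φ) • f₄) := by
      rw [hX, hY]; module
    have hinner : inner ℝ (X θ - Y φ) (X θ - Y φ) = (ε^2 : ℝ) := by
      rw [hd]
      simp only [inner_sub_left, inner_sub_right, inner_add_left, inner_add_right,
        real_inner_smul_left, real_inner_smul_right, h11, h22, h33, h44, h12, h21,
        h13, h31, h14, h41, h23, h32, h24, h42, h34, h43]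
      linear_combination (r*r) * Real.sin_sq_add_cos_sq θ + (r*r) * Real.sin_sq_add_cos_sq φ + 2 * hr2
    have hn2 : ‖X θ - Y φ‖^2 = ε^2 := by rw [← real_inner_self_eq_norm_sq]; exact hinner
    rw [dist_eq_norm, ← Real.sqrt_sq (norm_nonneg (X θ - Y φ)), hn2, Real.sqrt_sq hε.le]
  -- find safe angle ranges inside O₀, O₁
  have hcontX : Continuous X := by rw [hX]; fun_prop
  have hcontY : Continuous Y := by rw [hY]; fun_prop
  obtain ⟨δ₀, hδ₀, hball₀⟩ := Metric.isOpen_iff.1 (h₀.preimage hcontX) 0 (by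
    simp only [Set.mem_preimage, hX0]; exact hxO)
  obtain ⟨δ₁, hδ₁, hball₁⟩ := Metric.isOpen_iff.1 (h₁.preimage hcontY) 0 (by
    simp only [Set.mem_preimage, hY0]; exact hyO)
  set t : ℝ := min (min δ₀ δ₁) 1 with ht
  have htpos : 0 < t := lt_min (lt_min hδ₀ hδ₁) one_pos
  have ht1 : t ≤ 1 := min_le_right _ _
  set Θ : Fin n → ℝ := fun i => t/2 * ((i : ℝ)/n) with hΘ
  have hnpos : (0:ℝ) < n := by exact_mod_cast Nat.lt_of_lt_of_le Nat.zero_lt_one hn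
  have hΘmem : ∀ i : Fin n, Θ i ∈ Set.Icc (0:ℝ) (t/2) := by
    intro i
    have hfrac0 : (0:ℝ) ≤ ((i:ℕ) : ℝ)/n :=
      div_nonneg (Nat.cast_nonneg _) (Nat.cast_nonneg _)
    have hfrac1 : ((i:ℕ) : ℝ)/n ≤ 1 := by
      rw [div_le_one hnpos]
      exact_mod_cast (i.2).le
    constructor
    · exact mul_nonneg (by linarith) hfrac0
    · calc t/2 * (((i:ℕ) : ℝ)/n) ≤ t/2 * 1 :=
          mul_le_mul_of_nonneg_left hfrac1 (by linarith)
        _ = t/2 := mul_one _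
  have hΘinj : Function.Injective Θ := by
    intro i j hij
    rw [hΘ] at hij
    simp only at hij
    have h2 : ((i:ℕ):ℝ) = ((j:ℕ):ℝ) := by
      have := mul_left_cancel₀ (div_pos htpos two_pos).ne' hij
      exact (div_left_inj' hnpos.ne').1 this
    exact Fin.ext (by exact_mod_cast h2)
  have hΘcos : ∀ i : Fin n, Θ i ∈ Set.Icc (0:ℝ) Real.pi := by
    intro i
    obtain ⟨h1, h2⟩ := hΘmem i
    exact ⟨h1, h2.trans (by linarith [Real.pi_gt_three, ht1])⟩
  have hXmem : ∀ i : Fin n, X (Θ i) ∈ O₀ := by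
    intro i
    apply hball₀
    obtain ⟨h1, h2⟩ := hΘmem i
    simp only [Metric.mem_ball, Real.dist_eq, sub_zero]
    rw [abs_of_nonneg h1]
    calc Θ i ≤ t/2 := h2
      _ < t := by linarith
      _ ≤ δ₀ := (min_le_left _ _).trans (min_le_left _ _)
  have hYmem : ∀ j : Fin n, Y (Θ j) ∈ O₁ := by
    intro j
    apply hball₁
    obtain ⟨h1, h2⟩ := hΘmem j
    simp only [Metric.mem_ball, Real.dist_eq, sub_zero]
    rw [abs_of_nonneg h1]
    calc Θ j ≤ t/2 := h2
      _ < t := by linarith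
      _ ≤ δ₁ := (min_le_left _ _).trans (min_le_right _ _)
  -- injectivity of the point families
  have hXinj : Function.Injective (fun i => X (Θ i)) := by
    intro i j hij
    apply hΘinj
    simp only [hX] at hij
    have hsum : (r * Real.cos (Θ i)) • f₁ + (r * Real.sin (Θ i)) • f₂ =
        (r * Real.cos (Θ j)) • f₁ + (r * Real.sin (Θ j)) • f₂ := by
      exact add_left_cancel hij
    have hcos : r * Real.cos (Θ i) = r * Real.cos (Θ j) := by
      have := congrArg (fun z => (inner ℝ f₁ z : ℝ)) hsum
      simpa only [inner_add_right, real_inner_smul_right, h11, h12, mul_one, mul_zero,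
        add_zero] using this
    have hcos' : Real.cos (Θ i) = Real.cos (Θ j) :=
      mul_left_cancel₀ hrpos.ne' hcos
    exact Real.injOn_cos (hΘcos i) (hΘcos j) hcos'
  have hYinj : Function.Injective (fun j => Y (Θ j)) := by
    intro i j hij
    apply hΘinj
    simp only [hY] at hij
    have hsum : (r * Real.cos (Θ i)) • f₃ + (r * Real.sin (Θ i)) • f₄ =
        (r * Real.cos (Θ j)) • f₃ + (r * Real.sin (Θ j)) • f₄ := by
      exact add_left_cancel hij
    have hcos : r * Real.cos (Θ i) = r * Real.cos (Θ j) := by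
      have := congrArg (fun z => (inner ℝ f₃ z : ℝ)) hsum
      simpa only [inner_add_right, real_inner_smul_right, h33, h34, mul_one, mul_zero,
        add_zero] using this
    have hcos' : Real.cos (Θ i) = Real.cos (Θ j) :=
      mul_left_cancel₀ hrpos.ne' hcos
    exact Real.injOn_cos (hΘcos i) (hΘcos j) hcos'
  exact ⟨fun i => X (Θ i), fun j => Y (Θ j), hXinj, hYinj, hXmem, hYmem,
    fun i j => key (Θ i) (Θ j)⟩
end

section
/- Let Γ be an algebraic graph on ℝ^d (the adjacency relation is, off the diagonal, given by an algebraic subset of ℝ^d × ℝ^d), and suppose Γ contains no perfect biclique. Let A, B ⊆ ℝ^d be minimal uncountable algebraic sets. Then the set {z ∈ A : every y ∈ B is Γ-adjacent to z} is a countable (in fact, proper algebraic, hence countable) subset of A. -/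
/-- `A` is an algebraic subset of `ℝ^d`. -/
def IsAlgebraicSet (d : ℕ) (A : Set (Fin d → ℝ)) : Prop :=
  ∃ S : Finset (MvPolynomial (Fin d) ℝ),
    A = {x | ∀ p ∈ S, MvPolynomial.eval x p = 0}

/-- `Γ̄` is an algebraic subset of `ℝ^d × ℝ^d` (zero set of a finite family of real
polynomials in `d + d` variables). -/
def IsAlgebraicRel (d : ℕ) (Γ : Set ((Fin d → ℝ) × (Fin d → ℝ))) : Prop :=
  ∃ S : Finset (MvPolynomial (Fin d ⊕ Fin d) ℝ),
    Γ = {p | ∀ q ∈ S, MvPolynomial.eval (Sum.elim p.1 p.2) q = 0}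

lemma uncountable_nat_bool : ¬ Countable (ℕ → Bool) := by
  intro h
  obtain ⟨f, hf⟩ := (countable_iff_exists_injective _).mp h
  classical
  have hg : Function.Injective (fun (s : Set ℕ) (n : ℕ) => decide (n ∈ s)) := by
    intro s t hst
    ext n
    have := congrFun hst n
    simpa [decide_eq_decide] using this
  exact Function.cantor_injective (f ∘ fun (s : Set ℕ) (n : ℕ) => decide (n ∈ s))
    (hf.comp hg)

lemma perfect_not_countable {α : Type*} [MetricSpace α] [CompleteSpace α]
    {C : Set α} (hC : Perfect C) (hn : C.Nonempty) : ¬ C.Countable := by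
  obtain ⟨f, hfC, -, hf⟩ := hC.exists_nat_bool_injection hn
  intro h
  have h1 : (Set.range f).Countable := h.mono hfC
  have := h1.to_subtype
  have : Countable (ℕ → Bool) := Countable.of_equiv _ (Equiv.ofInjective f hf).symm
  exact uncountable_nat_bool this

lemma isClosed_of_algebraic {d : ℕ} {A : Set (Fin d → ℝ)} (h : IsAlgebraicSet d A) :
    IsClosed A := by
  obtain ⟨S, rfl⟩ := h
  have : {x : Fin d → ℝ | ∀ p ∈ S, MvPolynomial.eval x p = 0}
      = ⋂ p ∈ S, {x | MvPolynomial.eval x p = 0} := by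
    ext x; simp
  rw [this]
  exact isClosed_biInter fun p _ =>
    isClosed_eq (MvPolynomial.continuous_eval p) continuous_const

/-- If an algebraic graph `Γ` on `ℝ^d` contains no perfect biclique, and `A, B` are
minimal uncountable algebraic sets, then the set of `z ∈ A` adjacent to every point of
`B` is countable. -/
theorem no_biclique_countable_common_neighbors (d : ℕ)
    (Γbar : Set ((Fin d → ℝ) × (Fin d → ℝ))) (hΓ : IsAlgebraicRel d Γbar)
    (Adj : (Fin d → ℝ) → (Fin d → ℝ) → Prop)
    (hAdj : ∀ x y, Adj x y ↔ x ≠ y ∧ (x, y) ∈ Γbar)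
    (hsymm : ∀ x y, Adj x y → Adj y x)
    (hnobi : ¬ ∃ C₀ C₁ : Set (Fin d → ℝ),
      Perfect C₀ ∧ C₀.Nonempty ∧ Perfect C₁ ∧ C₁.Nonempty ∧
      ∀ x ∈ C₀, ∀ y ∈ C₁, Adj x y)
    (A B : Set (Fin d → ℝ))
    (hAalg : IsAlgebraicSet d A) (hAunc : ¬ A.Countable)
    (hAmin : ∀ A' : Set (Fin d → ℝ), IsAlgebraicSet d A' → A' ⊆ A → A' ≠ A →
      A'.Countable)
    (hBalg : IsAlgebraicSet d B) (hBunc : ¬ B.Countable)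
    (hBmin : ∀ B' : Set (Fin d → ℝ), IsAlgebraicSet d B' → B' ⊆ B → B' ≠ B →
      B'.Countable) :
    {z ∈ A | ∀ y ∈ B, Adj y z}.Countable := by
  classical
  by_contra hZ
  obtain ⟨SΓ, hSΓ⟩ := hΓ
  obtain ⟨SA, hSA⟩ := hAalg
  -- substitution of `y` into the first block of variables
  set φ : (Fin d → ℝ) → MvPolynomial (Fin d ⊕ Fin d) ℝ → MvPolynomial (Fin d) ℝ :=
    fun y q => MvPolynomial.eval₂ MvPolynomial.C
      (Sum.elim (fun i => MvPolynomial.C (y i)) MvPolynomial.X) q with hφ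
  have key : ∀ y z q, MvPolynomial.eval z (φ y q) = MvPolynomial.eval (Sum.elim y z) q := by
    intro y z q
    have hfun : (⇑(MvPolynomial.eval z) ∘
        Sum.elim (fun i => MvPolynomial.C (y i)) MvPolynomial.X) = Sum.elim y z := by
      funext i; cases i <;> simp
    rw [hφ, ← MvPolynomial.eval_assoc, hfun]
  -- the big family of polynomials
  set G : Set (MvPolynomial (Fin d) ℝ) :=
    (↑SA : Set _) ∪ {p | ∃ y ∈ B, ∃ q ∈ SΓ, p = φ y q} with hG
  obtain ⟨T, hT⟩ := (IsNoetherian.noetherian (Ideal.span G) : (Ideal.span G).FG)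
  rw [Ideal.submodule_span_eq] at hT
  -- vanishing on T iff vanishing on G
  have hvanish : ∀ z : Fin d → ℝ,
      (∀ p ∈ T, MvPolynomial.eval z p = 0) ↔ ∀ p ∈ G, MvPolynomial.eval z p = 0 := by
    intro z
    constructor
    · intro h p hp
      have hker : Ideal.span (↑T : Set (MvPolynomial (Fin d) ℝ))
          ≤ RingHom.ker (MvPolynomial.eval z) := by
        rw [Ideal.span_le]
        intro q hq
        exact RingHom.mem_ker.mpr (h q hq)
      have : p ∈ Ideal.span (↑T : Set _) := by
        rw [hT]; exact Ideal.subset_span hp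
      exact RingHom.mem_ker.mp (hker this)
    · intro h p hp
      have hker : Ideal.span G ≤ RingHom.ker (MvPolynomial.eval z) := by
        rw [Ideal.span_le]
        intro q hq
        exact RingHom.mem_ker.mpr (h q hq)
      have : p ∈ Ideal.span G := by
        rw [← hT]; exact Ideal.subset_span hp
      exact RingHom.mem_ker.mp (hker this)
  set Z' : Set (Fin d → ℝ) := {x | ∀ p ∈ T, MvPolynomial.eval x p = 0} with hZ'
  have hZ'alg : IsAlgebraicSet d Z' := ⟨T, rfl⟩
  have hZ'A : Z' ⊆ A := by
    intro z hz
    rw [hSA]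
    intro p hp
    exact ((hvanish z).mp hz) p (Or.inl hp)
  have hZsub : {z ∈ A | ∀ y ∈ B, Adj y z} ⊆ Z' := by
    rintro z ⟨hzA, hzadj⟩
    rw [hZ', Set.mem_setOf_eq, hvanish z]
    rintro p (hp | ⟨y, hy, q, hq, rfl⟩)
    · rw [hSA] at hzA; exact hzA p hp
    · have hmem : (y, z) ∈ Γbar := ((hAdj y z).mp (hzadj y hy)).2
      rw [hSΓ] at hmem
      rw [key]
      exact hmem q hq
  -- minimality forces Z' = A
  have hZ'eq : Z' = A := by
    by_contra hne
    exact hZ ((hAmin Z' hZ'alg hZ'A hne).mono hZsub)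
  -- so every pair in B × A lies in Γbar
  have hall : ∀ y ∈ B, ∀ z ∈ A, (y, z) ∈ Γbar := by
    intro y hy z hz
    rw [hSΓ]
    intro q hq
    rw [← key]
    have hzZ' : z ∈ Z' := hZ'eq ▸ hz
    exact ((hvanish z).mp hzZ') (φ y q) (Or.inr ⟨y, hy, q, hq, rfl⟩)
  have hadj : ∀ y ∈ B, ∀ z ∈ A, y ≠ z → Adj y z := fun y hy z hz hne =>
    (hAdj y z).mpr ⟨hne, hall y hy z hz⟩
  -- extract perfect sets
  obtain ⟨D₀, hD₀, hD₀ne, hD₀B⟩ :=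
    exists_perfect_nonempty_of_isClosed_of_not_countable (isClosed_of_algebraic hBalg) hBunc
  obtain ⟨D₁, hD₁, hD₁ne, hD₁A⟩ :=
    exists_perfect_nonempty_of_isClosed_of_not_countable (isClosed_of_algebraic ⟨SA, hSA⟩) hAunc
  by_cases hK : (D₀ ∩ D₁).Countable
  · -- intersection countable: shrink D₀ away from D₁
    have hD₀unc := perfect_not_countable hD₀ hD₀ne
    have : ¬ D₀ ⊆ D₀ ∩ D₁ := fun hsub => hD₀unc (hK.mono hsub)
    obtain ⟨x, hxD₀, hxK⟩ : ∃ x ∈ D₀, x ∉ D₀ ∩ D₁ := by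
      by_contra h
      push_neg at h
      exact this h
    have hKc : IsClosed (D₀ ∩ D₁) := hD₀.closed.inter hD₁.closed
    obtain ⟨ε, hε, hball⟩ :=
      Metric.mem_nhds_iff.mp (hKc.isOpen_compl.mem_nhds hxK)
    have hxU : x ∈ Metric.ball x (ε / 2) := Metric.mem_ball_self (by linarith)
    obtain ⟨hDperf, hDne⟩ :=
      hD₀.closure_nhds_inter x hxD₀ hxU Metric.isOpen_ball
    set D : Set (Fin d → ℝ) := closure (Metric.ball x (ε / 2) ∩ D₀) with hD
    have hDD₀ : D ⊆ D₀ := closure_minimal Set.inter_subset_right hD₀.closed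
    have hDKc : D ⊆ (D₀ ∩ D₁)ᶜ := by
      intro w hw
      apply hball
      have h1 : D ⊆ closure (Metric.ball x (ε / 2)) :=
        closure_mono Set.inter_subset_left
      have h2 : closure (Metric.ball x (ε / 2)) ⊆ Metric.closedBall x (ε / 2) :=
        Metric.closure_ball_subset_closedBall
      have h3 : Metric.closedBall x (ε / 2) ⊆ Metric.ball x ε :=
        Metric.closedBall_subset_ball (by linarith)
      exact h3 (h2 (h1 hw))
    refine hnobi ⟨D, D₁, hDperf, hDne, hD₁, hD₁ne, ?_⟩
    intro u hu y hy
    have huB : u ∈ B := hD₀B (hDD₀ hu)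
    have hyA : y ∈ A := hD₁A hy
    have hne : u ≠ y := by
      rintro rfl
      exact hDKc hu ⟨hDD₀ hu, hy⟩
    exact hadj u huB y hyA hne
  · -- intersection uncountable: split a perfect subset of it
    have hKclosed : IsClosed (D₀ ∩ D₁) := hD₀.closed.inter hD₁.closed
    obtain ⟨Q, hQ, hQne, hQK⟩ :=
      exists_perfect_nonempty_of_isClosed_of_not_countable hKclosed hK
    obtain ⟨Q₀, Q₁, ⟨hQ₀, hQ₀ne, hQ₀Q⟩, ⟨hQ₁, hQ₁ne, hQ₁Q⟩, hdisj⟩ :=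
      hQ.splitting hQne
    refine hnobi ⟨Q₀, Q₁, hQ₀, hQ₀ne, hQ₁, hQ₁ne, ?_⟩
    intro u hu y hy
    have huB : u ∈ B := hD₀B (hQK (hQ₀Q hu)).1
    have hyA : y ∈ A := hD₁A (hQK (hQ₁Q hy)).2
    have hne : u ≠ y := by
      rintro rfl
      exact Set.disjoint_left.mp hdisj hu hy
    exact hadj u huB y hyA hne
end

section
/- The ideal of subsets of ℕ of asymptotic density zero contains all finite sets, is closed under subsets and finite unions, and is not countably generated: for every countable family (aₙ) of density-zero sets there is a density-zero set b that is not contained in any aₙ even modulo finite sets. -/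
open scoped Classical

/-- `a ⊆ ℕ` has asymptotic density zero. -/
def HasDensityZero (a : Set ℕ) : Prop :=
  Filter.Tendsto
    (fun n => (((Finset.range n).filter (fun k => k ∈ a)).card : ℝ) / n)
    Filter.atTop (nhds 0)

open Filter

/-- Auxiliary squeezing lemma: a bound on the number of elements below `n`
which tends to zero after dividing by `n` gives density zero. -/
lemma hasDensityZero_of_le (a : Set ℕ) (g : ℕ → ℝ)
    (h : ∀ᶠ n in atTop, (((Finset.range n).filter (fun k => k ∈ a)).card : ℝ) ≤ g n)
    (hg : Tendsto (fun n => g n / n) atTop (nhds 0)) : HasDensityZero a := by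
  refine squeeze_zero' (Eventually.of_forall fun n => by positivity) ?_ hg
  filter_upwards [h] with n hn
  rcases Nat.eq_zero_or_pos n with rfl | hn0
  · simp
  · exact div_le_div_of_nonneg_right hn (by positivity) |>.trans (le_refl _)

/-- Auxiliary recursively defined sequence used in the diagonalization. -/
noncomputable def seqAux (φ : ℕ → ℕ → ℕ) : ℕ → ℕ
  | 0 => φ (Nat.unpair 0).1 1
  | m + 1 => φ (Nat.unpair (m + 1)).1 (max (seqAux φ m) (2 ^ (m + 1)))

/-- The ideal of density-zero subsets of `ℕ` contains all finite sets, is closed under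
subsets and finite unions, and is not countably generated. -/
theorem density_zero_ideal :
    (∀ a : Set ℕ, a.Finite → HasDensityZero a) ∧
    (∀ a b : Set ℕ, HasDensityZero b → a ⊆ b → HasDensityZero a) ∧
    (∀ a b : Set ℕ, HasDensityZero a → HasDensityZero b → HasDensityZero (a ∪ b)) ∧
    (∀ f : ℕ → Set ℕ, (∀ n, HasDensityZero (f n)) →
      ∃ b : Set ℕ, HasDensityZero b ∧ ∀ n, (b \ f n).Infinite) := by
  refine ⟨?_, ?_, ?_, ?_⟩
  · -- finite sets have density zero
    intro a ha
    refine hasDensityZero_of_le a (fun _ => (ha.toFinset.card : ℝ))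
      (Eventually.of_forall fun n => ?_) (tendsto_const_div_atTop_nhds_zero_nat _)
    show (((Finset.range n).filter (fun k => k ∈ a)).card : ℝ) ≤ (ha.toFinset.card : ℝ)
    exact_mod_cast Finset.card_le_card fun k hk =>
      ha.mem_toFinset.2 (Finset.mem_filter.1 hk).2
  · -- closed under subsets
    intro a b hb hab
    refine hasDensityZero_of_le a
      (fun n => (((Finset.range n).filter (fun k => k ∈ b)).card : ℝ))
      (Eventually.of_forall fun n => ?_) hb
    show (((Finset.range n).filter (fun k => k ∈ a)).card : ℝ)
      ≤ (((Finset.range n).filter (fun k => k ∈ b)).card : ℝ)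
    exact_mod_cast Finset.card_le_card
      (Finset.monotone_filter_right (Finset.range n) fun k _ hk => hab hk)
  · -- closed under unions
    intro a b ha hb
    refine hasDensityZero_of_le _
      (fun n => (((Finset.range n).filter (fun k => k ∈ a)).card : ℝ)
        + (((Finset.range n).filter (fun k => k ∈ b)).card : ℝ))
      (Eventually.of_forall fun n => ?_) ?_
    · have hsub : (Finset.range n).filter (fun k => k ∈ a ∪ b) ⊆
          ((Finset.range n).filter (fun k => k ∈ a))
            ∪ ((Finset.range n).filter (fun k => k ∈ b)) := by
        intro k hk
        simp only [Finset.mem_filter, Finset.mem_union, Set.mem_union] at hk ⊢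
        tauto
      have hcard := (Finset.card_le_card hsub).trans (Finset.card_union_le _ _)
      have hcard' : ((((Finset.range n).filter (fun k => k ∈ a ∪ b)).card : ℝ))
          ≤ (((Finset.range n).filter (fun k => k ∈ a)).card : ℝ)
            + (((Finset.range n).filter (fun k => k ∈ b)).card : ℝ) := by
        exact_mod_cast hcard
      convert hcard' using 4
    · have h := ha.add hb
      rw [add_zero] at h
      exact h.congr fun n => (add_div _ _ _).symm
  · -- not countably generated
    intro f hf
    have hcompl : ∀ n, {k | k ∉ f n}.Infinite := by
      intro n
      by_contra hfin
      rw [Set.not_infinite] at hfin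
      obtain ⟨N, hN⟩ : ∃ N : ℕ, ∀ k, k ∉ f n → k < N := by
        obtain ⟨N, hN⟩ := hfin.bddAbove
        exact ⟨N + 1, fun k hk => Nat.lt_succ_of_le (hN hk)⟩
      have key : ∀ m : ℕ,
          (m : ℝ) - N ≤ (((Finset.range m).filter (fun k => k ∈ f n)).card : ℝ) := by
        intro m
        have hsplit := Finset.card_filter_add_card_filter_not
          (p := fun k => k ∈ f n) (s := Finset.range m)
        have h2 : ((Finset.range m).filter (fun k => ¬ k ∈ f n)).card ≤ N := by
          have hsub : (Finset.range m).filter (fun k => ¬ k ∈ f n) ⊆ Finset.range N :=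
            fun k hk => Finset.mem_range.2 (hN k (Finset.mem_filter.1 hk).2)
          simpa using Finset.card_le_card hsub
        have hm : ((Finset.range m).filter (fun k => k ∈ f n)).card
            + ((Finset.range m).filter (fun k => ¬ k ∈ f n)).card = m := by
          simpa using hsplit
        have hmc : ((((Finset.range m).filter (fun k => k ∈ f n)).card : ℝ))
            + (((Finset.range m).filter (fun k => ¬ k ∈ f n)).card : ℝ) = m := by
          exact_mod_cast hm
        have h2c : ((((Finset.range m).filter (fun k => ¬ k ∈ f n)).card : ℝ)) ≤ N := by
          exact_mod_cast h2
        linarith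
      have h1 : Tendsto (fun m : ℕ => 1 - (N : ℝ) / m) atTop (nhds 1) := by
        simpa using tendsto_const_nhds.sub (tendsto_const_div_atTop_nhds_zero_nat (N : ℝ))
      have : (1 : ℝ) ≤ 0 := by
        refine le_of_tendsto_of_tendsto h1 (hf n) ?_
        filter_upwards [eventually_gt_atTop 0] with m hm
        have hm' : (0 : ℝ) < m := by exact_mod_cast hm
        have h3 : ((m : ℝ) - N) / m ≤
            (((Finset.range m).filter (fun k => k ∈ f n)).card : ℝ) / m :=
          div_le_div_of_nonneg_right (key m) hm'.le
        calc (1 : ℝ) - N / m = ((m : ℝ) - N) / m := by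
              rw [sub_div, div_self (ne_of_gt hm')]
          _ ≤ _ := h3
      linarith
    have hex : ∀ n t, ∃ x, x ∉ f n ∧ t < x := by
      intro n t
      obtain ⟨x, hx, hxt⟩ := (hcompl n).exists_gt t
      exact ⟨x, hx, hxt⟩
    choose φ hφ1 hφ2 using hex
    set g : ℕ → ℕ := seqAux φ with hg
    have hnot : ∀ m, g m ∉ f (Nat.unpair m).1 := by
      intro m
      cases m with
      | zero => exact hφ1 _ _
      | succ m => exact hφ1 _ _
    have hge : ∀ m, 2 ^ m ≤ g m := by
      intro m
      cases m with
      | zero =>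
        have := hφ2 (Nat.unpair 0).1 1
        simpa [hg, seqAux] using this.le
      | succ m =>
        have h1 : max (g m) (2 ^ (m + 1)) < g (m + 1) := hφ2 _ _
        exact le_of_lt (lt_of_le_of_lt (le_max_right _ _) h1)
    have hmono : StrictMono g := by
      refine strictMono_nat_of_lt_succ fun m => ?_
      have h1 : max (g m) (2 ^ (m + 1)) < g (m + 1) := hφ2 _ _
      exact lt_of_le_of_lt (le_max_left _ _) h1
    refine ⟨Set.range g, ?_, ?_⟩
    · -- density zero
      refine hasDensityZero_of_le _ (fun n => (Nat.log 2 n : ℝ) + 1)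
        (Eventually.of_forall fun n => ?_) ?_
      · have hsub : (Finset.range n).filter (fun k => k ∈ Set.range g)
            ⊆ (Finset.range (Nat.log 2 n + 1)).image g := by
          intro k hk
          rcases Finset.mem_filter.1 hk with ⟨hkr, hkb⟩
          obtain ⟨m, rfl⟩ := hkb
          refine Finset.mem_image.2 ⟨m, Finset.mem_range.2 ?_, rfl⟩
          have h1 : 2 ^ m ≤ g m := hge m
          have h2 : g m < n := Finset.mem_range.1 hkr
          have h3 : 2 ^ m ≤ n := le_of_lt (lt_of_le_of_lt h1 h2)
          have hn0 : n ≠ 0 := by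
            have := Nat.one_le_two_pow (n := m)
            omega
          exact Nat.lt_succ_of_le ((Nat.le_log_iff_pow_le one_lt_two hn0).2 h3)
        calc ((((Finset.range n).filter (fun k => k ∈ Set.range g)).card : ℝ))
            ≤ (((Finset.range (Nat.log 2 n + 1)).image g).card : ℝ) := by
              exact_mod_cast Finset.card_le_card hsub
          _ ≤ ((Nat.log 2 n + 1 : ℕ) : ℝ) := by
              exact_mod_cast (Finset.card_image_le).trans_eq (Finset.card_range _)
          _ = (Nat.log 2 n : ℝ) + 1 := by push_cast; ring
      · have h0 : Tendsto (fun x : ℝ => Real.log x / x) atTop (nhds 0) := by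
          simpa using Real.tendsto_pow_log_div_mul_add_atTop 1 0 1 one_ne_zero
        have h1 : Tendsto (fun x : ℝ => (Real.log x / Real.log 2 + 1) / x) atTop (nhds 0) := by
          have h2 := (h0.const_mul (Real.log 2)⁻¹).add tendsto_inv_atTop_zero
          simp only [mul_zero, add_zero] at h2
          refine h2.congr fun x => ?_
          simp only [div_eq_mul_inv]; ring
        have h2 := h1.comp (tendsto_natCast_atTop_atTop (R := ℝ))
        refine squeeze_zero' (Eventually.of_forall fun n => by positivity) ?_ h2
        filter_upwards [eventually_ge_atTop 1] with n hn
        have hn' : (0 : ℝ) < n := by exact_mod_cast hn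
        have hlb : (Nat.log 2 n : ℝ) ≤ Real.logb 2 n := Real.natLog_le_logb n 2
        have hlb' : (Nat.log 2 n : ℝ) + 1 ≤ Real.log n / Real.log 2 + 1 := by
          have : Real.logb 2 (n : ℝ) = Real.log n / Real.log 2 := rfl
          linarith [this ▸ hlb]
        exact div_le_div_of_nonneg_right hlb' hn'.le
    · -- b \ f n infinite
      intro n
      refine Set.infinite_of_injective_forall_mem
        (f := fun k : ℕ => g (Nat.pair n k)) ?_ ?_
      · intro k1 k2 h
        have := hmono.injective h
        exact (Nat.pair_eq_pair.mp this).2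
      · intro k
        refine ⟨⟨Nat.pair n k, rfl⟩, ?_⟩
        have := hnot (Nat.pair n k)
        simpa [Nat.unpair_pair] using this
end

section
/- Let X be a Polish space and Γ a closed symmetric relation on X × X. Suppose A₀, A₁ ⊆ X are uncountable analytic sets with A₀ × A₁ ⊆ Γ ∪ Diagonal. Then there exist disjoint perfect sets C₀ ⊆ A₀ and C₁ ⊆ A₁ with C₀ × C₁ ⊆ Γ. -/
open Set Filter Topology Metric

lemma exists_two_condensation {α : Type*} [TopologicalSpace α]
    [SecondCountableTopology α] {S : Set α} (hS : ¬S.Countable) :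
    ∃ x₀ x₁ : α, x₀ ≠ x₁ ∧ (∀ U ∈ 𝓝 x₀, ¬(S ∩ U).Countable) ∧
      (∀ U ∈ 𝓝 x₁, ¬(S ∩ U).Countable) := by
  obtain ⟨b, bct, -, bbasis⟩ := TopologicalSpace.exists_countable_basis α
  set v := {U ∈ b | (S ∩ U).Countable} with hv
  set T := S \ ⋃ U ∈ v, U with hTdef
  have hTcond : ∀ x ∈ T, ∀ U ∈ 𝓝 x, ¬(S ∩ U).Countable := by
    rintro x ⟨xS, xV⟩ U hU hcnt
    obtain ⟨Wb, hWb, xW, WU⟩ := bbasis.mem_nhds_iff.mp hU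
    exact xV (mem_biUnion ⟨hWb, hcnt.mono (inter_subset_inter_right _ WU)⟩ xW)
  have hT : ¬T.Countable := by
    intro hTc
    apply hS
    have hsub : S ⊆ T ∪ ⋃ U ∈ v, (S ∩ U) := by
      intro x hx
      by_cases h : x ∈ ⋃ U ∈ v, U
      · right
        obtain ⟨U, hU, hxU⟩ := mem_iUnion₂.mp h
        exact mem_iUnion₂.mpr ⟨U, hU, hx, hxU⟩
      · exact Or.inl ⟨hx, h⟩
    refine (hTc.union ?_).mono hsub
    exact (bct.mono (sep_subset _ _)).biUnion (fun U hU => hU.2)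
  have hnt : T.Nontrivial := by
    by_contra h
    exact hT (not_nontrivial_iff.mp h).countable
  obtain ⟨x₀, hx₀, x₁, hx₁, hne⟩ := hnt
  exact ⟨x₀, x₁, hne, hTcond _ hx₀, hTcond _ hx₁⟩

lemma shrink_lemma {β : Type*} [MetricSpace β] [TopologicalSpace.SeparableSpace β]
    {X : Type*} [TopologicalSpace X] {f : β → X} {V : Set β} (hV : IsOpen V)
    (hunc : ¬(f '' V).Countable) {δ : ℝ} (hδ : 0 < δ) :
    ∃ W, IsOpen W ∧ W ⊆ V ∧ ¬(f '' W).Countable ∧ ∃ c, W ⊆ ball c δ := by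
  obtain ⟨D, Dct, Ddense⟩ := TopologicalSpace.exists_countable_dense β
  by_contra h
  push_neg at h
  apply hunc
  have hcover : V ⊆ ⋃ c ∈ D, (V ∩ ball c δ) := by
    intro x hx
    obtain ⟨c, hc, hcd⟩ := Ddense.exists_dist_lt x hδ
    exact mem_iUnion₂.mpr ⟨c, hc, hx, by simpa [mem_ball, dist_comm] using hcd⟩
  have : f '' V ⊆ ⋃ c ∈ D, f '' (V ∩ ball c δ) := by
    rw [← image_iUnion₂ f]
    exact image_mono (f := f) hcover
  refine Countable.mono this (Dct.biUnion (fun c _ => ?_))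
  by_contra hc
  exact h (V ∩ ball c δ) (hV.inter isOpen_ball) inter_subset_left hc c inter_subset_right

lemma split_lemma {β : Type*} [MetricSpace β] [TopologicalSpace.SeparableSpace β]
    {X : Type*} [MetricSpace X] [SecondCountableTopology X]
    {f : β → X} {V : Set β} (hV : IsOpen V) (hf : Continuous f)
    (hunc : ¬(f '' V).Countable) {δ : ℝ} (hδ : 0 < δ) :
    ∃ W : Bool → Set β, (∀ b, IsOpen (W b) ∧ W b ⊆ V ∧ ¬(f '' W b).Countable ∧
      ∃ c, W b ⊆ ball c δ) ∧
      Disjoint (closure (f '' W false)) (closure (f '' W true)) := by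
  obtain ⟨x₀, x₁, hne, h₀, h₁⟩ := exists_two_condensation hunc
  set ε := dist x₀ x₁ / 3 with hε
  have hd : 0 < dist x₀ x₁ := dist_pos.mpr hne
  have hεpos : 0 < ε := by positivity
  set p : Bool → X := fun b => cond b x₁ x₀ with hp
  set V' : Bool → Set β := fun b => V ∩ f ⁻¹' (ball (p b) ε) with hV'
  have hcond : ∀ b, ∀ U ∈ 𝓝 (p b), ¬(f '' V ∩ U).Countable := by
    intro b
    cases b
    · exact h₀
    · exact h₁
  have hV'unc : ∀ b, ¬(f '' V' b).Countable := by
    intro b hc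
    refine hcond b (ball (p b) ε) (ball_mem_nhds _ hεpos) (hc.mono ?_)
    rintro y ⟨⟨v, hvV, rfl⟩, hy⟩
    exact ⟨v, ⟨hvV, hy⟩, rfl⟩
  have hV'ball : ∀ b, f '' V' b ⊆ ball (p b) ε := by
    rintro b y ⟨v, ⟨-, hv⟩, rfl⟩
    exact hv
  have hdisj : Disjoint (closure (f '' V' false)) (closure (f '' V' true)) := by
    rw [Set.disjoint_left]
    intro y hy0 hy1
    have c0 : y ∈ closedBall (p false) ε :=
      closure_ball_subset_closedBall (closure_mono (hV'ball false) hy0)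
    have c1 : y ∈ closedBall (p true) ε :=
      closure_ball_subset_closedBall (closure_mono (hV'ball true) hy1)
    have : dist x₀ x₁ ≤ ε + ε := by
      calc dist x₀ x₁ ≤ dist x₀ y + dist y x₁ := dist_triangle _ _ _
      _ ≤ ε + ε := add_le_add (by simpa [hp, dist_comm] using c0) (by simpa [hp] using c1)
    linarith [hd]
  have step : ∀ b, ∃ W, IsOpen W ∧ W ⊆ V' b ∧ ¬(f '' W).Countable ∧ ∃ c, W ⊆ ball c δ :=
    fun b => shrink_lemma (hV.inter (isOpen_ball.preimage hf)) (hV'unc b) hδ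
  choose W hWo hWs hWu hWb using step
  refine ⟨W, fun b => ⟨hWo b, (hWs b).trans inter_subset_left, hWu b, hWb b⟩, ?_⟩
  exact hdisj.mono (closure_mono (image_mono (f := f) (hWs false)))
    (closure_mono (image_mono (f := f) (hWs true)))


lemma perfect_in_range {β : Type*} [MetricSpace β] [CompleteSpace β]
    [TopologicalSpace.SeparableSpace β]
    {X : Type*} [MetricSpace X] [SecondCountableTopology X]
    {f : β → X} (hf : Continuous f) (hunc : ¬(range f).Countable) :
    ∃ C : Set X, Perfect C ∧ C.Nonempty ∧ C ⊆ range f := by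
  have key : ∀ (V : Set β) (n : ℕ), ∃ W : Bool → Set β,
      (IsOpen V ∧ ¬(f '' V).Countable) →
      ((∀ b, IsOpen (W b) ∧ W b ⊆ V ∧ ¬(f '' W b).Countable ∧
        ∃ c, W b ⊆ ball c ((1/2 : ℝ)^n)) ∧
      Disjoint (closure (f '' W false)) (closure (f '' W true))) := by
    intro V n
    by_cases h : IsOpen V ∧ ¬(f '' V).Countable
    · obtain ⟨W, hW1, hW2⟩ := split_lemma h.1 hf h.2 (pow_pos (by norm_num : (0:ℝ) < 1/2) n)
      exact ⟨W, fun _ => ⟨hW1, hW2⟩⟩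
    · exact ⟨fun _ => ∅, fun hP => absurd hP h⟩
  choose Wf hWf using key
  have huniv : ¬(f '' (univ : Set β)).Countable := by rwa [image_univ]
  obtain ⟨V₀, hV₀o, -, hV₀u, c₀, hV₀b⟩ :=
    shrink_lemma isOpen_univ huniv (by norm_num : (0:ℝ) < (1/2)^0)
  let Vs : List Bool → Set β := fun w =>
    List.rec V₀ (fun b w ih => Wf ih (w.length + 1) b) w
  have Vs_cons : ∀ (b : Bool) (w : List Bool), Vs (b :: w) = Wf (Vs w) (w.length + 1) b :=
    fun b w => rfl
  have inv : ∀ w : List Bool, IsOpen (Vs w) ∧ ¬(f '' Vs w).Countable ∧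
      ∃ c, Vs w ⊆ ball c ((1/2 : ℝ)^w.length) := by
    intro w
    induction w with
    | nil => exact ⟨hV₀o, hV₀u, c₀, hV₀b⟩
    | cons b w ih =>
      have h := hWf (Vs w) (w.length + 1) ⟨ih.1, ih.2.1⟩
      rw [Vs_cons]
      exact ⟨(h.1 b).1, (h.1 b).2.2.1, by simpa using (h.1 b).2.2.2⟩
  have sub : ∀ (b : Bool) (w : List Bool), Vs (b :: w) ⊆ Vs w := by
    intro b w
    have h := hWf (Vs w) (w.length + 1) ⟨(inv w).1, (inv w).2.1⟩
    rw [Vs_cons]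
    exact (h.1 b).2.1
  have disj : ∀ w : List Bool,
      Disjoint (closure (f '' Vs (false :: w))) (closure (f '' Vs (true :: w))) := by
    intro w
    have h := hWf (Vs w) (w.length + 1) ⟨(inv w).1, (inv w).2.1⟩
    rw [Vs_cons, Vs_cons]
    exact h.2
  have disj' : ∀ (u v : Bool), u ≠ v → ∀ w : List Bool,
      Disjoint (closure (f '' Vs (u :: w))) (closure (f '' Vs (v :: w))) := by
    intro u v huv w
    cases u <;> cases v
    · exact absurd rfl huv
    · exact disj w
    · exact (disj w).symm
    · exact absurd rfl huv
  have nonemp : ∀ w, (Vs w).Nonempty := by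
    intro w
    rcases eq_empty_or_nonempty (Vs w) with h | h
    · exact absurd (by simp [h]) (inv w).2.1
    · exact h
  let res : (ℕ → Bool) → ℕ → List Bool := fun b n => Nat.rec [] (fun n ih => b n :: ih) n
  have res_succ : ∀ b n, res b (n + 1) = b n :: res b n := fun _ _ => rfl
  have res_len : ∀ b n, (res b n).length = n := by
    intro b n
    induction n with
    | zero => rfl
    | succ n ih => rw [res_succ]; simp [ih]
  have res_mono : ∀ b {m n}, m ≤ n → Vs (res b n) ⊆ Vs (res b m) := by
    intro b m n h
    induction n with
    | zero => rw [Nat.le_zero.mp h]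
    | succ n ih =>
      rcases Nat.lt_or_ge m (n + 1) with h' | h'
      · exact (by rw [res_succ]; exact sub _ _ : Vs (res b (n+1)) ⊆ Vs (res b n)).trans
          (ih (Nat.lt_succ_iff.mp h'))
      · rw [Nat.le_antisymm h h']
  have res_eq : ∀ {b b' : ℕ → Bool} {n : ℕ}, (∀ i < n, b i = b' i) → res b n = res b' n := by
    intro b b' n h
    induction n with
    | zero => rfl
    | succ n ih =>
      rw [res_succ, res_succ, h n (Nat.lt_succ_self n),
        ih (fun i hi => h i (hi.trans (Nat.lt_succ_self n)))]
  have ychoice : ∀ (b : ℕ → Bool) (n : ℕ), ∃ z, z ∈ Vs (res b n) := fun b n => nonemp _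
  choose y hy using ychoice
  have hcauchy : ∀ b, CauchySeq (y b) := by
    intro b
    rw [Metric.cauchySeq_iff']
    intro ε hε
    obtain ⟨N, hN⟩ := exists_pow_lt_of_lt_one (by linarith : (0:ℝ) < ε/2)
      (by norm_num : (1/2 : ℝ) < 1)
    obtain ⟨c, hc⟩ := (inv (res b N)).2.2
    refine ⟨N, fun n hn => ?_⟩
    have h1 : y b n ∈ ball c ((1/2 : ℝ)^(res b N).length) := hc (res_mono b hn (hy b n))
    have h2 : y b N ∈ ball c ((1/2 : ℝ)^(res b N).length) := hc (hy b N)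
    rw [mem_ball, res_len] at h1 h2
    calc dist (y b n) (y b N) ≤ dist (y b n) c + dist c (y b N) := dist_triangle _ _ _
    _ < (1/2)^N + (1/2)^N := by rw [dist_comm c]; exact add_lt_add h1 h2
    _ < ε/2 + ε/2 := add_lt_add hN hN
    _ = ε := by ring
  have xlim : ∀ b, ∃ z, Tendsto (y b) atTop (𝓝 z) :=
    fun b => cauchySeq_tendsto_of_complete (hcauchy b)
  choose x hx using xlim
  have xmem : ∀ b n, x b ∈ closure (Vs (res b n)) := by
    intro b n
    refine mem_closure_of_tendsto (hx b) ?_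
    filter_upwards [eventually_ge_atTop n] with m hm
    exact res_mono b hm (hy b m)
  set g : (ℕ → Bool) → X := fun b => f (x b) with hg
  have hgA : ∀ b, g b ∈ range f := fun b => ⟨x b, rfl⟩
  have xdist : ∀ (b b' : ℕ → Bool) (n : ℕ), (∀ i < n, b i = b' i) →
      dist (x b) (x b') ≤ (1/2 : ℝ)^n + (1/2 : ℝ)^n := by
    intro b b' n h
    obtain ⟨c, hc⟩ := (inv (res b n)).2.2
    have h1 : x b ∈ closedBall c ((1/2 : ℝ)^(res b n).length) :=
      closure_ball_subset_closedBall ((closure_mono hc) (xmem b n))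
    have h2 : x b' ∈ closedBall c ((1/2 : ℝ)^(res b n).length) := by
      refine closure_ball_subset_closedBall ((closure_mono hc) ?_)
      rw [res_eq h]
      exact xmem b' n
    rw [mem_closedBall, res_len] at h1 h2
    calc dist (x b) (x b') ≤ dist (x b) c + dist c (x b') := dist_triangle _ _ _
    _ ≤ (1/2)^n + (1/2)^n := add_le_add h1 (by rwa [dist_comm])
  have xcont : Continuous x := by
    rw [continuous_iff_continuousAt]
    intro b
    rw [ContinuousAt, Metric.tendsto_nhds]
    intro ε hε
    obtain ⟨N, hN⟩ := exists_pow_lt_of_lt_one (by linarith : (0:ℝ) < ε/2)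
      (by norm_num : (1/2 : ℝ) < 1)
    have hU : {b' : ℕ → Bool | ∀ i < N, b' i = b i} ∈ 𝓝 b := by
      have hEq : {b' : ℕ → Bool | ∀ i < N, b' i = b i} =
          ⋂ i ∈ Finset.range N, (fun b' : ℕ → Bool => b' i) ⁻¹' {b i} := by
        ext b'; simp
      rw [hEq]
      exact Filter.biInter_finset_mem _ |>.mpr fun i _ =>
        (continuous_apply i).continuousAt.preimage_mem_nhds (by simp)
    filter_upwards [hU] with b' hb'
    calc dist (x b') (x b) ≤ (1/2 : ℝ)^N + (1/2 : ℝ)^N := xdist b' b N hb'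
    _ < ε/2 + ε/2 := add_lt_add hN hN
    _ = ε := by ring
  have gcont : Continuous g := hf.comp xcont
  have ginj : Function.Injective g := by
    intro b b' hbb
    by_contra hne
    have hex : ∃ i, b i ≠ b' i := by
      by_contra h
      push_neg at h
      exact hne (funext h)
    set n := Nat.find hex with hn
    have hnd : b n ≠ b' n := Nat.find_spec hex
    have hagree : ∀ i < n, b i = b' i := fun i hi => not_not.mp (Nat.find_min hex hi)
    have m1 : g b ∈ closure (f '' Vs (b n :: res b n)) := by
      refine image_closure_subset_closure_image hf (mem_image_of_mem f ?_)
      rw [← res_succ]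
      exact xmem b (n+1)
    have m2 : g b' ∈ closure (f '' Vs (b' n :: res b n)) := by
      refine image_closure_subset_closure_image hf (mem_image_of_mem f ?_)
      rw [res_eq hagree, ← res_succ]
      exact xmem b' (n+1)
    exact (disj' (b n) (b' n) hnd (res b n)).ne_of_mem m1 m2 hbb
  have hcs : IsCompact (range g) := isCompact_range gcont
  refine ⟨range g, ⟨hcs.isClosed, ?_⟩, range_nonempty g, ?_⟩
  · rintro z ⟨b, rfl⟩
    rw [accPt_iff_nhds]
    intro U hU
    have htend : Tendsto (fun k => Function.update b k (!(b k))) atTop (𝓝 b) := by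
      rw [tendsto_pi_nhds]
      intro i
      refine Tendsto.congr' ?_ tendsto_const_nhds
      filter_upwards [eventually_gt_atTop i] with k hk
      exact (Function.update_of_ne (Nat.ne_of_lt hk) _ _).symm
    have hev : ∀ᶠ k in atTop, g (Function.update b k (!(b k))) ∈ U :=
      ((gcont.tendsto b).comp htend).eventually_mem hU
    obtain ⟨k, hk⟩ := hev.exists
    have hne2 : Function.update b k (!(b k)) ≠ b := by
      intro hcontra
      have := congrFun hcontra k
      simp at this
    exact ⟨g (Function.update b k (!(b k))), ⟨hk, mem_range_self _⟩,
      fun hEq => hne2 (ginj hEq)⟩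
  · rintro z ⟨b, rfl⟩
    exact hgA b

theorem analytic_contains_perfect {X : Type*} [TopologicalSpace X] [PolishSpace X]
    {A : Set X} (hA : MeasureTheory.AnalyticSet A) (hunc : ¬A.Countable) :
    ∃ C : Set X, Perfect C ∧ C.Nonempty ∧ C ⊆ A := by
  letI := TopologicalSpace.upgradeIsCompletelyMetrizable X
  rw [MeasureTheory.AnalyticSet] at hA
  rcases hA with rfl | ⟨f, hf, rfl⟩
  · exact absurd countable_empty hunc
  letI := TopologicalSpace.upgradeIsCompletelyMetrizable (ℕ → ℕ)
  exact perfect_in_range (β := ℕ → ℕ) hf hunc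



/-- If `Γ` is a closed symmetric relation on a Polish space `X` and `A₀, A₁` are
uncountable analytic sets with `A₀ × A₁ ⊆ Γ ∪ diagonal`, then there are disjoint
perfect sets `C₀ ⊆ A₀`, `C₁ ⊆ A₁` with `C₀ × C₁ ⊆ Γ`. -/
theorem analytic_biclique_to_perfect_biclique {X : Type*} [TopologicalSpace X]
    [PolishSpace X] (Γ : Set (X × X)) (hclosed : IsClosed Γ)
    (hsymm : ∀ x y : X, (x, y) ∈ Γ → (y, x) ∈ Γ)
    (A₀ A₁ : Set X)
    (hA₀ : MeasureTheory.AnalyticSet A₀) (hA₁ : MeasureTheory.AnalyticSet A₁)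
    (hA₀unc : ¬ A₀.Countable) (hA₁unc : ¬ A₁.Countable)
    (hsub : A₀ ×ˢ A₁ ⊆ Γ ∪ {p : X × X | p.1 = p.2}) :
    ∃ C₀ C₁ : Set X,
      Perfect C₀ ∧ C₀.Nonempty ∧ Perfect C₁ ∧ C₁.Nonempty ∧
      C₀ ⊆ A₀ ∧ C₁ ⊆ A₁ ∧ Disjoint C₀ C₁ ∧ C₀ ×ˢ C₁ ⊆ Γ := by
  obtain ⟨D₀, hD₀p, hD₀ne, hD₀A⟩ := analytic_contains_perfect hA₀ hA₀unc
  obtain ⟨D₁, hD₁p, hD₁ne, hD₁A⟩ := analytic_contains_perfect hA₁ hA₁unc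
  letI := TopologicalSpace.upgradeIsCompletelyMetrizable X
  -- find x₀ ∈ D₀, x₁ ∈ D₁ with x₀ ≠ x₁
  obtain ⟨x₁, hx₁⟩ := hD₁ne
  obtain ⟨E₀, E₁, ⟨-, ⟨e₀, he₀⟩, hE₀D⟩, ⟨-, ⟨e₁, he₁⟩, hE₁D⟩, hEdisj⟩ :=
    hD₀p.splitting hD₀ne
  obtain ⟨x₀, hx₀D, hx₀ne⟩ : ∃ x₀ ∈ D₀, x₀ ≠ x₁ := by
    by_cases h : e₀ = x₁
    · refine ⟨e₁, hE₁D he₁, fun hc => ?_⟩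
      exact hEdisj.ne_of_mem he₀ he₁ (h.trans hc.symm)
    · exact ⟨e₀, hE₀D he₀, h⟩
  obtain ⟨U, hx₀U, hUo, V, hx₁V, hVo, hUV⟩ := exists_open_nhds_disjoint_closure hx₀ne
  obtain ⟨hC₀p, hC₀ne⟩ := hD₀p.closure_nhds_inter x₀ hx₀D hx₀U hUo
  obtain ⟨hC₁p, hC₁ne⟩ := hD₁p.closure_nhds_inter x₁ hx₁ hx₁V hVo
  have hC₀D : closure (U ∩ D₀) ⊆ D₀ := hD₀p.closed.closure_subset_iff.mpr inter_subset_right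
  have hC₁D : closure (V ∩ D₁) ⊆ D₁ := hD₁p.closed.closure_subset_iff.mpr inter_subset_right
  have hdisj : Disjoint (closure (U ∩ D₀)) (closure (V ∩ D₁)) :=
    hUV.mono (closure_mono inter_subset_left) (closure_mono inter_subset_left)
  refine ⟨closure (U ∩ D₀), closure (V ∩ D₁), hC₀p, hC₀ne, hC₁p, hC₁ne,
    hC₀D.trans hD₀A, hC₁D.trans hD₁A, hdisj, ?_⟩
  rintro ⟨a, c⟩ ⟨ha, hc⟩
  rcases hsub ⟨hD₀A (hC₀D ha), hD₁A (hC₁D hc)⟩ with h | h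
  · exact h
  · exact absurd h (hdisj.ne_of_mem ha hc)
end
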